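/- Let A : ℝ → ℝ be L-Lipschitz, and let φ ∈ C_c^∞(ℝ) be even, nonnegative, supported in B(0,1), with ∫ φ = 1. Set φ_s(x) = s⁻¹φ(x/s) and P_s(A')(x) := (A' * φ_s)(x). Define β_A(B(x,s)) := inf_{a,b} sup_{y ∈ B(x,s)} |A(y) − ay − b|/s. Then for all x ∈ ℝ, s > 0, and y ∈ B(x,s): |A(x) − A(y) − P_s(A')(x)·(x − y)| ≤ C_φ · s · β_A(B(x,s)), where C_φ depends only on φ. -/

import Mathlib

open MeasureTheory

open Filter Topology

lemma ibp_lipschitz {K : NNReal} {F g : ℝ → ℝ} (hF : LipschitzWith K F)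
    (hg : ContDiff ℝ 1 g) (hgc : HasCompactSupport g) :
    ∫ u, deriv F u * g u = -∫ u, F u * deriv g u := by
  -- Lipschitz constant for g
  obtain ⟨Cg, hCg⟩ : ∃ C : ℝ, ∀ u, ‖deriv g u‖ ≤ C := by
    obtain ⟨C, hC⟩ := (hgc.deriv.isCompact).exists_bound_of_continuousOn
      (hg.continuous_deriv le_rfl).continuousOn
    refine ⟨max C 0, fun u => ?_⟩
    by_cases hu : u ∈ tsupport (deriv g)
    · exact (hC u hu).trans (le_max_left _ _)
    · simp [image_eq_zero_of_notMem_tsupport hu]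
  have hCg0 : 0 ≤ Cg := le_trans (norm_nonneg _) (hCg 0)
  have gLip : LipschitzWith ⟨Cg, hCg0⟩ g :=
    lipschitzWith_of_nnnorm_deriv_le (hg.differentiable one_ne_zero) fun u => hCg u
  set h : ℕ → ℝ := fun n => 1 / (n + 1) with hh
  have hpos : ∀ n, 0 < h n := fun n => by positivity
  have hle1 : ∀ n, h n ≤ 1 := fun n => by
    rw [hh]; rw [div_le_one (by positivity)]; simp
  have htend : Tendsto h atTop (𝓝 0) := tendsto_one_div_add_atTop_nhds_zero_nat
  have htend' : Tendsto h atTop (𝓝[≠] (0:ℝ)) :=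
    tendsto_nhdsWithin_of_tendsto_nhds_of_eventually_within _ htend
      (Eventually.of_forall fun n => (hpos n).ne')
  have hgcont : Continuous g := hg.continuous
  have hFcont : Continuous F := hF.continuous
  set Dn : ℕ → ℝ → ℝ := fun n u => (F (u + h n) - F u) / h n * g u with hDn
  set En : ℕ → ℝ → ℝ := fun n u => F u * ((g (u - h n) - g u) / h n) with hEn
  -- limit of ∫ Dn
  have limD : Tendsto (fun n => ∫ u, Dn n u) atTop (𝓝 (∫ u, deriv F u * g u)) := by
    refine tendsto_integral_of_dominated_convergence (fun u => (K : ℝ) * |g u|)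
      (fun n => Continuous.aestronglyMeasurable ?_)
      ((hgcont.integrable_of_hasCompactSupport hgc).norm.const_mul _)
      (fun n => Eventually.of_forall fun u => ?_) ?_
    · exact (((hFcont.comp (continuous_id.add continuous_const)).sub hFcont).div_const _).mul
        hgcont
    · rw [hDn]
      simp only [Real.norm_eq_abs, abs_mul]
      gcongr
      rw [abs_div, abs_of_pos (hpos n), div_le_iff₀ (hpos n)]
      calc |F (u + h n) - F u| ≤ K * |u + h n - u| := by
            simpa [Real.dist_eq] using hF.dist_le_mul (u + h n) u
        _ = K * h n := by rw [add_sub_cancel_left, abs_of_pos (hpos n)]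
    · filter_upwards [hF.ae_differentiableAt (μ := volume)] with u hu
      have := (hu.hasDerivAt.tendsto_slope_zero).comp htend'
      have h2 : Tendsto (fun n => (h n)⁻¹ * (F (u + h n) - F u)) atTop (𝓝 (deriv F u)) := by
        simpa [Function.comp_def] using this
      have := h2.mul (tendsto_const_nhds (x := g u))
      simpa [hDn, div_eq_inv_mul] using this
  -- limit of ∫ En
  set Kset : Set ℝ := Metric.cthickening 1 (tsupport g) with hKset
  have hKsetc : IsCompact Kset := hgc.cthickening
  obtain ⟨M, hM⟩ := hKsetc.exists_bound_of_continuousOn hFcont.continuousOn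
  have hout : ∀ n u, u ∉ Kset → g u = 0 ∧ g (u - h n) = 0 := by
    intro n u hu
    constructor
    · by_contra hne
      exact hu (Metric.mem_cthickening_of_dist_le u u 1 _ (subset_tsupport g hne) (by simp))
    · by_contra hne
      refine hu (Metric.mem_cthickening_of_dist_le u (u - h n) 1 _ (subset_tsupport g hne) ?_)
      rw [Real.dist_eq, sub_sub_cancel, abs_of_pos (hpos n)]
      exact hle1 n
  have limE : Tendsto (fun n => ∫ u, En n u) atTop (𝓝 (∫ u, F u * -(deriv g u))) := by
    refine tendsto_integral_of_dominated_convergence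
      (Kset.indicator fun _ => M * Cg)
      (fun n => Continuous.aestronglyMeasurable ?_) ?_
      (fun n => Eventually.of_forall fun u => ?_)
      (Eventually.of_forall fun u => ?_)
    · exact hFcont.mul (((hgcont.comp (continuous_id.sub continuous_const)).sub hgcont).div_const _)
    · rw [integrable_indicator_iff hKsetc.isClosed.measurableSet]
      exact integrableOn_const hKsetc.measure_lt_top.ne
    · by_cases hu : u ∈ Kset
      · rw [Set.indicator_of_mem hu, hEn]
        simp only [Real.norm_eq_abs, abs_mul]
        have h1 : |F u| ≤ M := by simpa using hM u hu
        have h2 : |(g (u - h n) - g u) / h n| ≤ Cg := by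
          rw [abs_div, abs_of_pos (hpos n), div_le_iff₀ (hpos n)]
          calc |g (u - h n) - g u| ≤ Cg * |u - h n - u| := by
                have := gLip.dist_le_mul (u - h n) u; rw [Real.dist_eq, Real.dist_eq] at this; exact this
            _ = Cg * h n := by
                rw [sub_sub_cancel_left, abs_neg, abs_of_pos (hpos n)]
        have hMnn : 0 ≤ M := (abs_nonneg _).trans h1
        calc |F u| * |(g (u - h n) - g u) / h n| ≤ M * Cg :=
              mul_le_mul h1 h2 (abs_nonneg _) hMnn
          _ = M * Cg := rfl
      · rw [Set.indicator_of_notMem hu, hEn]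
        obtain ⟨e1, e2⟩ := hout n u hu
        simp [e1, e2]
    · -- pointwise limit
      have hd : HasDerivAt g (deriv g u) u := (hg.differentiable one_ne_zero u).hasDerivAt
      have htn : Tendsto (fun n => -h n) atTop (𝓝[≠] (0:ℝ)) := by
        refine tendsto_nhdsWithin_of_tendsto_nhds_of_eventually_within _ (by
          simpa using htend.neg) (Eventually.of_forall fun n => ?_)
        simpa using (hpos n).ne'
      have h1 := hd.tendsto_slope_zero.comp htn
      have h2 : Tendsto (fun n => (-h n)⁻¹ * (g (u + -h n) - g u)) atTop
          (𝓝 (deriv g u)) := by simpa [Function.comp_def] using h1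
      have h3 := (tendsto_const_nhds (x := F u)).mul h2.neg
      refine h3.congr fun n => ?_
      rw [hEn]
      ring_nf
  -- identify the two sequences of integrals
  have key : ∀ n, ∫ u, Dn n u = ∫ u, En n u := by
    intro n
    have cs1 : HasCompactSupport (fun u => F (u + h n) * g u) := hgc.mul_left
    have cs2 : HasCompactSupport (fun u => F u * g u) := hgc.mul_left
    have cs3 : HasCompactSupport (fun u => F u * g (u - h n)) := by
      have : HasCompactSupport (fun u : ℝ => g (u - h n)) :=
        hgc.comp_isClosedEmbedding (Homeomorph.subRight (h n)).isClosedEmbedding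
      exact this.mul_left
    have i1 : Integrable (fun u => F (u + h n) * g u) :=
      ((hFcont.comp (continuous_id.add continuous_const)).mul
        hgcont).integrable_of_hasCompactSupport cs1
    have i2 : Integrable (fun u => F u * g u) :=
      (hFcont.mul hgcont).integrable_of_hasCompactSupport cs2
    have i3 : Integrable (fun u => F u * g (u - h n)) :=
      (hFcont.mul (hgcont.comp
        (continuous_id.sub continuous_const))).integrable_of_hasCompactSupport cs3
    have tr : ∫ u, F (u + h n) * g u = ∫ u, F u * g (u - h n) := by
      have := integral_add_right_eq_self (μ := volume)
        (fun u => F u * g (u - h n)) (h n)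
      simpa using this
    calc ∫ u, Dn n u = ∫ u, ((F (u + h n) * g u) / h n - (F u * g u) / h n) := by
          refine integral_congr_ae (Eventually.of_forall fun u => ?_)
          rw [hDn]; ring
      _ = (∫ u, F (u + h n) * g u) / h n - (∫ u, F u * g u) / h n := by
          rw [integral_sub (i1.div_const _) (i2.div_const _), integral_div, integral_div]
      _ = (∫ u, F u * g (u - h n)) / h n - (∫ u, F u * g u) / h n := by rw [tr]
      _ = ∫ u, En n u := by
          rw [← integral_div, ← integral_div,
            ← integral_sub (i3.div_const _) (i2.div_const _)]
          refine integral_congr_ae (Eventually.of_forall fun u => ?_)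
          rw [hEn]; ring
  have : ∫ u, deriv F u * g u = ∫ u, F u * -(deriv g u) :=
    tendsto_nhds_unique (limD.congr fun n => key n) limE
  rw [this]
  simp [integral_neg]

lemma comp_scale' (f : ℝ → ℝ) (x s : ℝ) (hs : 0 < s) :
    ∫ u, f ((x - u) / s) = s * ∫ u, f u := by
  have h1 : ∫ u, f ((x - u) / s) = ∫ u, f ((x + u) / s) := by
    rw [← integral_neg_eq_self (fun u => f ((x + u) / s)) volume]
    simp [sub_eq_add_neg]
  have h2 : ∫ u, f ((x + u) / s) = ∫ u, f (u / s) :=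
    integral_add_left_eq_self (fun w => f (w / s)) x
  have h3 : ∫ u : ℝ, f (u / s) = |s| • ∫ u, f u :=
    Measure.integral_comp_div f s
  rw [h1, h2, h3, abs_of_pos hs, smul_eq_mul]

/-- The averaged affine approximation `y ↦ P_s(A')(x) y` deviates from the
Lipschitz function `A` on `B(x,s)` by at most a constant (depending only on the
bump function `φ`) times `s · β_A(B(x,s))`, where `β_A` is the Jones beta number. -/
theorem stmt18 (φ : ℝ → ℝ) (hφsmooth : ContDiff ℝ (⊤ : ℕ∞) φ)
    (hφsupp : Function.support φ ⊆ Set.Icc (-1 : ℝ) 1)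
    (hφeven : ∀ x : ℝ, φ (-x) = φ x)
    (hφnn : ∀ x : ℝ, 0 ≤ φ x)
    (hφint : (∫ x, φ x) = 1) :
    ∃ C : ℝ, 0 < C ∧
      ∀ (L : ℝ) (A : ℝ → ℝ),
        (∀ x y : ℝ, |A x - A y| ≤ L * |x - y|) →
        ∀ (x s : ℝ), 0 < s → ∀ y ∈ Set.Icc (x - s) (x + s),
          |A x - A y - (∫ u, deriv A u * (φ ((x - u) / s) / s)) * (x - y)| ≤
            C * s * sInf {β : ℝ | 0 ≤ β ∧ ∃ a b : ℝ,
              ∀ z ∈ Set.Icc (x - s) (x + s), |A z - (a * z + b)| ≤ β * s} := by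
  classical
  set ψ : ℝ → ℝ := deriv φ with hψdef
  have hψcont : Continuous ψ := hφsmooth.continuous_deriv (by simp)
  have hψint0 : 0 ≤ ∫ u, |ψ u| := integral_nonneg fun u => abs_nonneg _
  set C : ℝ := 2 + ∫ u, |ψ u| with hCdef
  have hC : 0 < C := by positivity
  refine ⟨C, hC, ?_⟩
  intro L A hA x s hs y hy
  set S := {β : ℝ | 0 ≤ β ∧ ∃ a b : ℝ,
    ∀ z ∈ Set.Icc (x - s) (x + s), |A z - (a * z + b)| ≤ β * s} with hSdef
  have hL0 : 0 ≤ L := by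
    have h := (abs_nonneg (A 0 - A 1)).trans (hA 0 1)
    simpa using h
  have hSne : S.Nonempty := by
    refine ⟨L, hL0, 0, A x, fun z hz => ?_⟩
    have hz' : |z - x| ≤ s := abs_le.mpr ⟨by linarith [hz.1], by linarith [hz.2]⟩
    calc |A z - (0 * z + A x)| = |A z - A x| := by ring_nf
      _ ≤ L * |z - x| := hA z x
      _ ≤ L * s := by nlinarith
  have hCs : 0 < C * s := mul_pos hC hs
  -- the key estimate for every member of S
  have key : ∀ β ∈ S,
      |A x - A y - (∫ u, deriv A u * (φ ((x - u) / s) / s)) * (x - y)| ≤ C * s * β := by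
    rintro β ⟨hβ0, a, b, hab⟩
    set g : ℝ → ℝ := fun u => φ ((x - u) / s) / s with hgdef
    have hφ1 : ContDiff ℝ 1 φ := hφsmooth.of_le (by simp)
    have hg : ContDiff ℝ 1 g :=
      (hφ1.comp ((contDiff_const.sub contDiff_id).div_const s)).div_const s
    have hg' : ∀ u, HasDerivAt g (ψ ((x - u) / s) * (-1 / s) / s) u := by
      intro u
      have inner : HasDerivAt (fun u : ℝ => (x - u) / s) (-1 / s) u := by
        simpa using ((hasDerivAt_id u).const_sub x).div_const s
      have outer : HasDerivAt φ (ψ ((x - u) / s)) ((x - u) / s) :=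
        (hφsmooth.differentiable (by simp) _).hasDerivAt
      exact (outer.comp u inner).div_const s
    have hderivg : ∀ u, deriv g u = ψ ((x - u) / s) * (-1 / s) / s :=
      fun u => (hg' u).deriv
    have hsuppg : ∀ u, u ∉ Set.Icc (x - s) (x + s) → g u = 0 := by
      intro u hu
      rw [hgdef]
      by_contra hne
      have hφne : φ ((x - u) / s) ≠ 0 := fun h0 => hne (by simp [h0])
      obtain ⟨h1, h2⟩ := hφsupp hφne
      rw [le_div_iff₀ hs] at h1
      rw [div_le_iff₀ hs] at h2
      exact hu ⟨by linarith, by linarith⟩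
    have hgc : HasCompactSupport g :=
      HasCompactSupport.intro (isCompact_Icc (a := x - s) (b := x + s)) hsuppg
    -- Lipschitz structure
    have hALip : LipschitzWith (Real.toNNReal L) A := by
      refine LipschitzWith.of_dist_le_mul fun u v => ?_
      rw [Real.dist_eq, Real.dist_eq, Real.coe_toNNReal L hL0]
      exact hA u v
    set F : ℝ → ℝ := fun u => A u - (a * u + b) with hFdef
    have hFLip : LipschitzWith (Real.toNNReal L + ‖a‖₊) F := by
      refine LipschitzWith.of_dist_le_mul fun u v => ?_
      rw [Real.dist_eq, Real.dist_eq]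
      push_cast
      rw [Real.coe_toNNReal L hL0]
      calc |F u - F v| = |(A u - A v) + (-(a * (u - v)))| := by
            rw [hFdef]; ring_nf
        _ ≤ |A u - A v| + |(-(a * (u - v)))| := abs_add_le _ _
        _ ≤ L * |u - v| + |a| * |u - v| := by
            rw [abs_neg, abs_mul]
            exact add_le_add (hA u v) le_rfl
        _ = (L + ‖a‖) * |u - v| := by rw [Real.norm_eq_abs]; ring
    have hFame : ∀ᵐ u : ℝ, deriv A u = deriv F u + a := by
      filter_upwards [hALip.ae_differentiableAt (μ := volume)] with u hu
      have haff : HasDerivAt (fun w : ℝ => a * w + b) a u := by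
        simpa using ((hasDerivAt_id u).const_mul a).add_const b
      have hFd : HasDerivAt F (deriv A u - a) u := hu.hasDerivAt.sub haff
      rw [hFd.deriv]; ring
    have hgcont : Continuous g := hg.continuous
    have ig : Integrable g := hgcont.integrable_of_hasCompactSupport hgc
    have hKF : ∀ u, |deriv F u| ≤ ((Real.toNNReal L + ‖a‖₊ : NNReal) : ℝ) := fun u => by
      simpa [Real.norm_eq_abs] using norm_deriv_le_of_lipschitz (x₀ := u) hFLip
    have idFg : Integrable (fun u => deriv F u * g u) := by
      refine Integrable.mono' (ig.norm.const_mul ((Real.toNNReal L + ‖a‖₊ : NNReal) : ℝ))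
        ((stronglyMeasurable_deriv F).aestronglyMeasurable.mul hgcont.aestronglyMeasurable)
        (Eventually.of_forall fun u => ?_)
      rw [Real.norm_eq_abs, abs_mul, Real.norm_eq_abs]
      exact mul_le_mul_of_nonneg_right (hKF u) (abs_nonneg _)
    have hintg : ∫ u, g u = 1 := by
      rw [hgdef]
      simp only [integral_div]
      rw [comp_scale' φ x s hs, hφint, mul_one, div_self hs.ne']
    have hP : ∫ u, deriv A u * g u = -(∫ u, F u * deriv g u) + a := by
      have e1 : ∫ u, deriv A u * g u = ∫ u, (deriv F u * g u + a * g u) := by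
        refine integral_congr_ae ?_
        filter_upwards [hFame] with u hu
        rw [hu]; ring
      rw [e1, integral_add idFg (ig.const_mul a), integral_const_mul, hintg,
        ibp_lipschitz hFLip hg hgc, mul_one]
    have htsupp : tsupport g ⊆ Set.Icc (x - s) (x + s) :=
      closure_minimal (Function.support_subset_iff'.mpr hsuppg) isClosed_Icc
    have hsupp_dg : ∀ u, u ∉ Set.Icc (x - s) (x + s) → deriv g u = 0 := by
      intro u hu
      by_contra hne
      exact hu (htsupp (support_deriv_subset hne))
    have hdgcont : Continuous (deriv g) := hg.continuous_deriv le_rfl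
    have idg : Integrable (fun u => |deriv g u|) :=
      (hdgcont.integrable_of_hasCompactSupport hgc.deriv).norm
    have habs_dg : ∀ u, |deriv g u| = |ψ ((x - u) / s)| / s ^ 2 := by
      intro u
      rw [hderivg u,
        show ψ ((x - u) / s) * (-1 / s) / s = -(ψ ((x - u) / s) / s ^ 2) from by ring,
        abs_neg, abs_div, abs_of_pos (by positivity : (0:ℝ) < s ^ 2)]
    have hintdg : ∫ u, |deriv g u| = (∫ u, |ψ u|) / s := by
      have e2 : ∫ u, |deriv g u| = ∫ u, |ψ ((x - u) / s)| / s ^ 2 :=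
        integral_congr_ae (Eventually.of_forall fun u => habs_dg u)
      rw [e2]
      simp only [integral_div]
      rw [comp_scale' (fun w => |ψ w|) x s hs]
      field_simp
    have hbd : |∫ u, F u * deriv g u| ≤ β * ∫ u, |ψ u| := by
      have step1 : |∫ u, F u * deriv g u| ≤ ∫ u, (β * s) * |deriv g u| := by
        rw [← Real.norm_eq_abs]
        refine norm_integral_le_of_norm_le (idg.const_mul (β * s))
          (Eventually.of_forall fun u => ?_)
        rw [Real.norm_eq_abs, abs_mul]
        by_cases hu : u ∈ Set.Icc (x - s) (x + s)
        · have hFu : |F u| ≤ β * s := by simpa [hFdef] using hab u hu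
          exact mul_le_mul_of_nonneg_right hFu (abs_nonneg _)
        · simp [hsupp_dg u hu]
      have step2 : ∫ u, (β * s) * |deriv g u| = β * ∫ u, |ψ u| := by
        rw [integral_const_mul, hintdg]
        field_simp
      rw [step2] at step1
      exact step1
    -- final estimate
    have hPeq : (∫ u, deriv A u * (φ ((x - u) / s) / s))
        = -(∫ u, F u * deriv g u) + a := hP
    rw [hPeq]
    have hxy : |x - y| ≤ s := abs_le.mpr ⟨by linarith [hy.2], by linarith [hy.1]⟩
    have hFx : |F x| ≤ β * s := by
      simpa [hFdef] using hab x ⟨by linarith, by linarith⟩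
    have hFy : |F y| ≤ β * s := by simpa [hFdef] using hab y hy
    set I := ∫ u, F u * deriv g u with hIdef
    have expand : A x - A y - (-I + a) * (x - y) = (F x - F y) + I * (x - y) := by
      rw [hFdef]; ring
    rw [expand]
    have triangle : |(F x - F y) + I * (x - y)| ≤ |F x| + |F y| + |I| * |x - y| := by
      calc |(F x - F y) + I * (x - y)| ≤ |F x - F y| + |I * (x - y)| := abs_add_le _ _
        _ ≤ (|F x| + |F y|) + |I| * |x - y| := by
            rw [abs_mul]
            exact add_le_add (abs_sub _ _) le_rfl
    have hIxy : |I| * |x - y| ≤ (β * ∫ u, |ψ u|) * s :=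
      mul_le_mul hbd hxy (abs_nonneg _) (by positivity)
    have : |F x| + |F y| + |I| * |x - y| ≤ C * s * β := by
      rw [hCdef]; nlinarith
    exact triangle.trans this
  -- conclude via the infimum
  have h1 : |A x - A y - (∫ u, deriv A u * (φ ((x - u) / s) / s)) * (x - y)| / (C * s)
      ≤ sInf S := by
    refine le_csInf hSne fun β hβ => ?_
    rw [div_le_iff₀ hCs]
    calc |A x - A y - (∫ u, deriv A u * (φ ((x - u) / s) / s)) * (x - y)|
        ≤ C * s * β := key β hβ
      _ = β * (C * s) := by ring
  have h2 := (div_le_iff₀ hCs).mp h1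
  calc |A x - A y - (∫ u, deriv A u * (φ ((x - u) / s) / s)) * (x - y)|
      ≤ sInf S * (C * s) := h2
    _ = C * s * sInf S := by ring
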